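/- Let δ be an algebraic integer of degree 2 over ℚ, and let a, b be integers, p a prime with p ∣ b and p ∤ a. Write t = v_p(b). Let k be a positive integer with ℓ = v_p(k), and write (a + bδ)^k = a_k + b_k δ with a_k, b_k ∈ ℤ. Assume that p is odd, or that p = 2 and t ≥ 2, or that ℓ = 0. Then a_k ≡ a^k (mod p^{ℓ+t+1}) and b_k ≡ k·a^{k-1}·b (mod p^{ℓ+t+1}). -/

import Mathlib

/-!
Expand `(a + bδ)^k` binomially. The terms with `j = 0, 1` give `a^k + k a^(k-1) b δ`, and
every other term is `C(k,j) b^j` times an integral combination of `1` and `δ` (as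
`δ^2 = u + vδ`). So it suffices that `p^(ℓ+t+1) ∣ C(k,j) b^j` for `2 ≤ j ≤ k`. Writing
`s = v_p(j)`, the identity `k C(k-1,j-1) = j C(k,j)` gives `v_p(C(k,j)) ≥ ℓ - s`, while
`v_p(b^j) ≥ jt`; and `p^s ≤ j` forces `s + t + 1 ≤ jt` except when `p = 2`, `t = 1`, which is
why that case needs `ℓ = 0`.
-/

open Finset Submodule
open scoped Pointwise

theorem padicValNat_le_padicValNat_choose_add {p k j : ℕ} [Fact p.Prime] (hj : 0 < j)
    (hjk : j ≤ k) : padicValNat p k ≤ padicValNat p (k.choose j) + padicValNat p j := by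
  obtain ⟨k, rfl⟩ : ∃ k', k = k' + 1 := ⟨k - 1, by omega⟩
  obtain ⟨j, rfl⟩ : ∃ j', j = j' + 1 := ⟨j - 1, by omega⟩
  rw [← padicValNat.mul (Nat.choose_pos hjk).ne' (by omega), ← Nat.add_one_mul_choose_eq]
  have hne : (k + 1) * k.choose j ≠ 0 := Nat.mul_ne_zero (by omega) (Nat.choose_pos (by omega)).ne'
  exact (padicValNat_dvd_iff_le hne).mp (pow_padicValNat_dvd.mul_right _)

theorem add_add_one_le_mul_of_pow_le {p s j t : ℕ} (hp : p.Prime) (hj : 2 ≤ j) (hpj : p ^ s ≤ j)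
    (ht : 1 ≤ t) (h : Odd p ∨ p = 2 ∧ 2 ≤ t) : s + t + 1 ≤ j * t := by
  have hbernoulli : 1 + s * (p - 1) ≤ j :=
    calc 1 + s * (p - 1) ≤ (1 + (p - 1)) ^ s :=
          one_add_mul_le_pow_of_sq_nonneg (Nat.zero_le _) (Nat.zero_le _) (Nat.zero_le _) s
      _ = p ^ s := by rw [Nat.add_sub_cancel' hp.one_le]
      _ ≤ j := hpj
  have hjt : j + 2 * t ≤ j * t + 2 := by nlinarith
  rcases h with hodd | ⟨rfl, ht2⟩
  · have hp3 : 2 ≤ p - 1 := by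
      obtain ⟨m, rfl⟩ := hodd
      have := hp.two_le
      omega
    have := Nat.mul_le_mul_left s hp3
    omega
  · omega

theorem pow_dvd_choose_mul_pow {p k j t : ℕ} {b : ℤ} (hp : p.Prime) (hb : (p : ℤ) ^ t ∣ b)
    (ht : 1 ≤ t) (hj : 2 ≤ j) (hjk : j ≤ k)
    (h : Odd p ∨ (p = 2 ∧ 2 ≤ t) ∨ padicValNat p k = 0) :
    (p : ℤ) ^ (padicValNat p k + t + 1) ∣ k.choose j * b ^ j := by
  have := Fact.mk hp
  have hchoose := padicValNat_le_padicValNat_choose_add (p := p) (by omega : 0 < j) hjk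
  have h2t : 2 * t ≤ j * t := Nat.mul_le_mul_right t hj
  have hexp : padicValNat p k + t + 1 ≤ padicValNat p (k.choose j) + j * t := by
    rw [← or_assoc] at h
    rcases h with h | h
    · have := add_add_one_le_mul_of_pow_le hp hj
        (Nat.le_of_dvd (by omega) pow_padicValNat_dvd) ht h
      omega
    · omega
  calc (p : ℤ) ^ (padicValNat p k + t + 1)
      ∣ (p : ℤ) ^ padicValNat p (k.choose j) * ((p : ℤ) ^ t) ^ j := by
        rw [← pow_mul, ← pow_add, mul_comm t]
        exact pow_dvd_pow _ hexp
    _ ∣ k.choose j * b ^ j :=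
        mul_dvd_mul (mod_cast pow_padicValNat_dvd) (pow_dvd_pow_of_dvd hb j)

theorem add_pow_eq_add_add_sum_Ico {R : Type*} [CommSemiring R] (x y : R) (k : ℕ) :
    (x + y) ^ k = y ^ k + k * x * y ^ (k - 1) +
      ∑ j ∈ Ico 2 (k + 1), x ^ j * y ^ (k - j) * k.choose j := by
  rcases k with _ | k
  · simp
  rw [add_pow, range_eq_Ico, sum_eq_sum_Ico_succ_bot (by omega), sum_eq_sum_Ico_succ_bot (by omega)]
  simp only [zero_add, Nat.reduceAdd, pow_zero, pow_one, Nat.choose_zero_right,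
    Nat.choose_one_right, Nat.sub_zero, Nat.add_sub_cancel, Nat.cast_one, one_mul, mul_one]
  ring

section QuadraticLattice

variable {R : Type*} [CommRing R] {δ : R} {u v : ℤ}

theorem mul_mem_span_one_self_of_sq_eq (h2 : δ ^ 2 = u + v * δ) {z : R}
    (hz : z ∈ span ℤ ({1, δ} : Set R)) : z * δ ∈ span ℤ ({1, δ} : Set R) := by
  obtain ⟨m, n, rfl⟩ := mem_span_pair.mp hz
  refine mem_span_pair.mpr ⟨n * u, m + n * v, ?_⟩
  simp only [zsmul_eq_mul, Int.cast_mul, Int.cast_add]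
  linear_combination (-(n : R)) * h2

theorem pow_mem_span_one_self_of_sq_eq (h2 : δ ^ 2 = u + v * δ) (j : ℕ) :
    δ ^ j ∈ span ℤ ({1, δ} : Set R) := by
  induction j with
  | zero => simpa using subset_span (Set.mem_insert (1 : R) {δ})
  | succ j ih => exact pow_succ δ j ▸ mul_mem_span_one_self_of_sq_eq h2 ih

theorem exists_add_mul_pow_eq (h2 : δ ^ 2 = u + v * δ) (a b N : ℤ) (k : ℕ)
    (hN : ∀ j ∈ Ico 2 (k + 1), N ∣ k.choose j * b ^ j) :
    ∃ m n : ℤ, ((a : R) + b * δ) ^ k =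
      ((a ^ k + N * m : ℤ) : R) + ((k * a ^ (k - 1) * b + N * n : ℤ) : R) * δ := by
  have hmem : ∑ j ∈ Ico 2 (k + 1), ((b : R) * δ) ^ j * (a : R) ^ (k - j) * k.choose j ∈
      N • span ℤ ({1, δ} : Set R) := by
    refine sum_mem fun j hj => ?_
    obtain ⟨q, hq⟩ := hN j hj
    have hqR := congrArg (Int.cast : ℤ → R) hq
    have : ((b : R) * δ) ^ j * (a : R) ^ (k - j) * k.choose j =
        N • (q * a ^ (k - j)) • δ ^ j := by
      simp only [zsmul_eq_mul, Int.cast_mul, Int.cast_pow]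
      push_cast at hqR
      linear_combination (a : R) ^ (k - j) * δ ^ j * hqR
    rw [this]
    exact smul_mem_pointwise_smul _ _ _ (smul_mem _ _ (pow_mem_span_one_self_of_sq_eq h2 j))
  obtain ⟨w, hw, hNw⟩ := (mem_smul_pointwise_iff_exists _ _ _).mp hmem
  obtain ⟨m, n, rfl⟩ := mem_span_pair.mp hw
  refine ⟨m, n, ?_⟩
  rw [add_comm (a : R), add_pow_eq_add_add_sum_Ico, ← hNw]
  simp only [zsmul_eq_mul, Int.cast_add, Int.cast_mul, Int.cast_pow, Int.cast_natCast]
  ring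

end QuadraticLattice

theorem stmt_8_general {R : Type*} [CommRing R] (δ : R) (u v : ℤ)
    (h2 : δ ^ 2 = (u : R) + (v : R) * δ)
    (hindep : ∀ m n m_ n_ : ℤ, (m : R) + (n : R) * δ = (m_ : R) + (n_ : R) * δ → m = m_ ∧ n = n_)
    (a b : ℤ) (p : ℕ) (hp : p.Prime) (hpb : (p : ℤ) ∣ b) (hb : b ≠ 0)
    (t : ℕ) (ht : t = padicValInt p b)
    (k : ℕ) (ℓ : ℕ) (hℓ : ℓ = padicValNat p k)
    (a_k b_k : ℤ) (hpow : ((a : R) + (b : R) * δ) ^ k = (a_k : R) + (b_k : R) * δ)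
    (hcase : Odd p ∨ (p = 2 ∧ 2 ≤ t) ∨ ℓ = 0) :
    (p : ℤ) ^ (ℓ + t + 1) ∣ a_k - a ^ k ∧
      (p : ℤ) ^ (ℓ + t + 1) ∣ b_k - (k : ℤ) * a ^ (k - 1) * b := by
  have := Fact.mk hp
  subst ht hℓ
  have htb : (p : ℤ) ^ padicValInt p b ∣ b := padicValInt_dvd b
  have ht : 1 ≤ padicValInt p b := by
    rw [padicValInt]
    exact one_le_padicValNat_of_dvd (Int.natAbs_ne_zero.mpr hb) (Int.natCast_dvd.mp hpb)
  obtain ⟨m, n, hmn⟩ := exists_add_mul_pow_eq h2 a b _ k fun j hj =>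
    have ⟨hj2, hjk⟩ := mem_Ico.mp hj
    pow_dvd_choose_mul_pow hp htb ht hj2 (Nat.lt_succ_iff.mp hjk) hcase
  obtain ⟨rfl, rfl⟩ := hindep _ _ _ _ (hpow.symm.trans hmn)
  exact ⟨⟨m, by ring⟩, ⟨n, by ring⟩⟩

theorem stmt_8 {R : Type*} [CommRing R] (δ : R) (u v : ℤ)
    (h2 : δ ^ 2 = (u : R) + (v : R) * δ)
    (hindep : ∀ m n m_ n_ : ℤ, (m : R) + (n : R) * δ = (m_ : R) + (n_ : R) * δ → m = m_ ∧ n = n_)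
    (a b : ℤ) (p : ℕ) (hp : p.Prime) (hpb : (p : ℤ) ∣ b) (hpa : ¬ (p : ℤ) ∣ a) (hb : b ≠ 0)
    (t : ℕ) (ht : t = padicValInt p b)
    (k : ℕ) (hk : 0 < k) (ℓ : ℕ) (hℓ : ℓ = padicValNat p k)
    (a_k b_k : ℤ) (hpow : ((a : R) + (b : R) * δ) ^ k = (a_k : R) + (b_k : R) * δ)
    (hcase : Odd p ∨ (p = 2 ∧ 2 ≤ t) ∨ ℓ = 0) :
    (p : ℤ) ^ (ℓ + t + 1) ∣ a_k - a ^ k ∧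
      (p : ℤ) ^ (ℓ + t + 1) ∣ b_k - (k : ℤ) * a ^ (k - 1) * b :=
  stmt_8_general δ u v h2 hindep a b p hp hpb hb t ht k ℓ hℓ a_k b_k hpow hcase
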